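/- For the gl(1|1)-modules II_{λ,γ} and II_{λ',γ'} with λ + λ' ≠ 0, the tensor product II_{λ,γ} ⊗ II_{λ',γ'} decomposes as a direct sum II_{λ+λ',γ+γ'} ⊕ II_{λ+λ',γ+γ'-1}. -/

import Mathlib

/-!
STATEMENT 12: For the gl(1|1)-modules II_{λ,γ} and II_{λ',γ'} with
λ + λ' ≠ 0, the tensor product II_{λ,γ} ⊗ II_{λ',γ'} decomposes as
II_{λ+λ',γ+γ'} ⊕ II_{λ+λ',γ+γ'-1}.

II_{λ,γ} is modelled on ℂ × ℂ with basis v = (1,0) (even), w = (0,1) (odd):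
Hv = λv, Hw = λw, Gv = γv, Gw = (γ-1)w, Q-v = w, Q+w = λv, Q+v = Q-w = 0.
The tensor product (with the Koszul-sign coproduct x ↦ x⊗1 + 1⊗x) is modelled
on ℂ⁴ in the basis v⊗v', v⊗w', w⊗v', w⊗w' (coordinates a, b, c, d).
-/

noncomputable section

abbrev V2 := ℂ × ℂ
abbrev V4 := ℂ × ℂ × ℂ × ℂ

/-- action on II_{λ,γ} -/
def mH (lam : ℂ) (x : V2) : V2 := (lam * x.1, lam * x.2)
def mG (gam : ℂ) (x : V2) : V2 := (gam * x.1, (gam - 1) * x.2)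
def mQm (x : V2) : V2 := (0, x.1)
def mQp (lam : ℂ) (x : V2) : V2 := (lam * x.2, 0)

/-- action on the tensor product II_{λ,γ} ⊗ II_{λ',γ'} -/
def TH (lam lam' : ℂ) (x : V4) : V4 :=
  ((lam + lam') * x.1, (lam + lam') * x.2.1,
    (lam + lam') * x.2.2.1, (lam + lam') * x.2.2.2)
def TG (gam gam' : ℂ) (x : V4) : V4 :=
  ((gam + gam') * x.1, (gam + gam' - 1) * x.2.1,
    (gam + gam' - 1) * x.2.2.1, (gam + gam' - 2) * x.2.2.2)
def TQm (x : V4) : V4 := (0, x.1, x.1, x.2.1 - x.2.2.1)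
def TQp (lam lam' : ℂ) (x : V4) : V4 :=
  (lam' * x.2.1 + lam * x.2.2.1, lam * x.2.2.2, -(lam' * x.2.2.2), 0)

/-!
Put `Λ = λ + λ'`. The even vectors `u₁ = v ⊗ v'` and `u₂ = λ v ⊗ w' - λ' w ⊗ v'` are killed
by `Q₊` and have `G`-weights `γ + γ'` and `γ + γ' - 1`; moreover `Q₋u₂ = Λ w ⊗ w'`. Hence
sending the standard bases of `II_{Λ,γ+γ'}` and `II_{Λ,γ+γ'-1}` to `u₁, Q₋u₁` and `u₂, Q₋u₂`
intertwines the actions, and these four vectors form a basis of the tensor product exactly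
when `Λ ≠ 0`. The decomposition is the inverse of this map.
-/

section

variable (lam lam' : ℂ)

def sumToTensor : V2 × V2 →ₗ[ℂ] V4 where
  toFun y := (y.1.1, y.1.2 + lam * y.2.1, y.1.2 - lam' * y.2.1, (lam + lam') * y.2.2)
  map_add' y z := by ext <;> simp only [Prod.fst_add, Prod.snd_add] <;> ring
  map_smul' c y := by ext <;> simp only [Prod.smul_fst, Prod.smul_snd, smul_eq_mul,
    RingHom.id_apply] <;> ring

theorem sumToTensor_semiconj_H :
    Function.Semiconj (sumToTensor lam lam')
      (Prod.map (mH (lam + lam')) (mH (lam + lam'))) (TH lam lam') := by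
  intro y
  ext <;> simp only [sumToTensor, LinearMap.coe_mk, AddHom.coe_mk, Prod.map, mH, TH] <;> ring

theorem sumToTensor_semiconj_G (gam gam' : ℂ) :
    Function.Semiconj (sumToTensor lam lam')
      (Prod.map (mG (gam + gam')) (mG (gam + gam' - 1))) (TG gam gam') := by
  intro y
  ext <;> simp only [sumToTensor, LinearMap.coe_mk, AddHom.coe_mk, Prod.map, mG, TG] <;> ring

theorem sumToTensor_semiconj_Qp :
    Function.Semiconj (sumToTensor lam lam')
      (Prod.map (mQp (lam + lam')) (mQp (lam + lam'))) (TQp lam lam') := by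
  intro y
  ext <;> simp only [sumToTensor, LinearMap.coe_mk, AddHom.coe_mk, Prod.map, mQp, TQp] <;> ring

theorem sumToTensor_semiconj_Qm :
    Function.Semiconj (sumToTensor lam lam') (Prod.map mQm mQm) TQm := by
  intro y
  ext <;> simp only [sumToTensor, LinearMap.coe_mk, AddHom.coe_mk, Prod.map, mQm, TQm] <;> ring

theorem sumToTensor_injective (h : lam + lam' ≠ 0) :
    Function.Injective (sumToTensor lam lam') := by
  rw [← LinearMap.ker_eq_bot, LinearMap.ker_eq_bot']
  rintro ⟨⟨a, b⟩, ⟨c, d⟩⟩ hy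
  simp only [sumToTensor, LinearMap.coe_mk, AddHom.coe_mk, Prod.mk_eq_zero] at hy
  obtain ⟨ha, hb, hc, hd⟩ := hy
  have hc' : c = 0 := (mul_eq_zero.1 (by linear_combination hb - hc)).resolve_left h
  have hb' : b = 0 := by linear_combination hb - lam * hc'
  have hd' : d = 0 := (mul_eq_zero.1 hd).resolve_left h
  simp [ha, hb', hc', hd']

end

theorem II_tensor_II (lam gam lam' gam' : ℂ) (h : lam + lam' ≠ 0) :
    ∃ e : V4 ≃ₗ[ℂ] V2 × V2,
      (∀ x : V4, e (TH lam lam' x)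
          = (mH (lam + lam') (e x).1, mH (lam + lam') (e x).2)) ∧
      (∀ x : V4, e (TG gam gam' x)
          = (mG (gam + gam') (e x).1, mG (gam + gam' - 1) (e x).2)) ∧
      (∀ x : V4, e (TQp lam lam' x)
          = (mQp (lam + lam') (e x).1, mQp (lam + lam') (e x).2)) ∧
      (∀ x : V4, e (TQm x) = (mQm (e x).1, mQm (e x).2)) := by
  let f : (V2 × V2) ≃ₗ[ℂ] V4 :=
    (sumToTensor lam lam').linearEquivOfInjective (sumToTensor_injective lam lam' h)
      (by simp only [Module.finrank_prod, Module.finrank_self])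
  have inv {ga gb} (hs : Function.Semiconj f ga gb) : Function.Semiconj f.symm gb ga :=
    hs.inverse_left f.symm_apply_apply f.apply_symm_apply
  exact ⟨f.symm, inv (sumToTensor_semiconj_H lam lam'),
    inv (sumToTensor_semiconj_G lam lam' gam gam'), inv (sumToTensor_semiconj_Qp lam lam'),
    inv (sumToTensor_semiconj_Qm lam lam')⟩

end
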